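/- Let q = 2r where r ≥ 2 is an integer. Then for every integer k ≥ 0, the following identity of Möbius transformations of ℝ∞ holds: T_1^{r−1} ∘ (T_2 ∘ T_1^{r−2})^k ∘ T_2 ∘ T_1^{r−1} = σ ∘ τ_q^{−1} ∘ σ ∘ (T_{−1}^{r−2} ∘ T_{−2})^{k+1} ∘ T_{−1}^{r−2} ∘ τ_q^{−1}, where powers denote iterated composition. -/

import Mathlib

open OnePoint

noncomputable def lamq (q : ℕ) : ℝ := 2 * Real.cos (Real.pi / q)

abbrev RInf : Type := OnePoint ℝ

noncomputable def sigmaFun : RInf → RInf := fun z =>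
  match z with
  | Option.none => ((0 : ℝ) : RInf)
  | Option.some x => if x = 0 then (∞ : RInf) else ((-x⁻¹ : ℝ) : RInf)

lemma sigmaFun_invol (z : RInf) : sigmaFun (sigmaFun z) = z := by
  cases z with
  | none => simp [sigmaFun, OnePoint.infty] <;> rfl
  | some x =>
    by_cases h : x = 0
    · simp only [sigmaFun, h, if_true, if_pos]
      rfl
    · simp only [sigmaFun, h, if_false]
      have h1 : (-x⁻¹ : ℝ) ≠ 0 := by simpa using h
      simp only [h1, if_false]
      have h2 : (-(-x⁻¹)⁻¹ : ℝ) = x := by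
        rw [inv_neg, inv_inv, neg_neg]
      rw [h2]
      rfl

noncomputable def sigmaP : Equiv.Perm RInf :=
  ⟨sigmaFun, sigmaFun, sigmaFun_invol, sigmaFun_invol⟩

noncomputable def tauP (q : ℕ) : Equiv.Perm RInf where
  toFun z := match z with
    | Option.none => (∞ : RInf)
    | Option.some x => Option.some (x + lamq q)
  invFun z := match z with
    | Option.none => (∞ : RInf)
    | Option.some x => Option.some (x - lamq q)
  left_inv z := by cases z <;> simp [OnePoint.infty] <;> rfl
  right_inv z := by cases z <;> simp [OnePoint.infty] <;> rfl

noncomputable def Gq (q : ℕ) : Subgroup (Equiv.Perm RInf) :=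
  Subgroup.closure {sigmaP, tauP q}

def FareyVertex (q : ℕ) (v : RInf) : Prop := ∃ g ∈ Gq q, g ∞ = v

def FareyAdj (q : ℕ) (u v : RInf) : Prop :=
  u ≠ v ∧ ∃ g ∈ Gq q,
    ((g ((0:ℝ) : RInf) = u ∧ g ∞ = v) ∨ (g ((0:ℝ) : RInf) = v ∧ g ∞ = u))

noncomputable def rhoP (q : ℕ) : Equiv.Perm RInf := tauP q * sigmaP

def V0 (q : ℕ) : Set RInf := {v | ∃ i : ℕ, i < q ∧ (rhoP q ^ i) ∞ = v}

def IsFace (q : ℕ) (P : Set RInf) : Prop := ∃ g ∈ Gq q, P = ⇑g '' V0 q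

/-- `y` lies in the connected component of `ℝ∞ \ {u, v}` that does not contain `x`. -/
def SepSide (u v x y : RInf) : Prop :=
  y ∈ ({u, v}ᶜ : Set RInf) ∧ x ∉ connectedComponentIn ({u, v}ᶜ : Set RInf) y

noncomputable def Tq (q : ℕ) (b : ℤ) : RInf → RInf := fun z =>
  match z with
  | Option.none => ((b * lamq q : ℝ) : RInf)
  | Option.some x => if x = 0 then (∞ : RInf) else ((b * lamq q - x⁻¹ : ℝ) : RInf)

noncomputable def RosenValue (q : ℕ) (bs : List ℤ) : RInf := bs.foldr (Tq q) ∞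

def IsGeodesicRosen (q : ℕ) (bs : List ℤ) : Prop :=
  bs ≠ [] ∧ RosenValue q bs ≠ ∞ ∧
  ∀ cs : List ℤ, cs ≠ [] → RosenValue q cs = RosenValue q bs → bs.length ≤ cs.length

def IsPathFrom (q : ℕ) (p : List RInf) (x y : RInf) : Prop :=
  p.Chain' (FareyAdj q) ∧ p.head? = Option.some x ∧ p.getLast? = Option.some y

def IsGeodesicPath (q : ℕ) (p : List RInf) (x y : RInf) : Prop :=
  IsPathFrom q p x y ∧ ∀ p' : List RInf, IsPathFrom q p' x y → p.length ≤ p'.length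

/-- `{u, v}` is a pair of `y`-parents of `x`. -/
def IsParentPair (q : ℕ) (y x u v : RInf) : Prop :=
  ∃ g ∈ Gq q, ∃ i : ℤ,
    g ((rhoP q ^ i) ∞) = x ∧
    ({u, v} : Set RInf) = {g ((rhoP q ^ (i-1)) ∞), g ((rhoP q ^ (i+1)) ∞)} ∧
    SepSide u v x y

/-- `P 0, …, P (n-1)` is the q-chain from `x` to `y`. -/
def IsQChain (q : ℕ) (x y : RInf) (n : ℕ) (P : ℕ → Set RInf) : Prop :=
  1 ≤ n ∧ (∀ j < n, IsFace q (P j)) ∧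
  (∃ g ∈ Gq q, ∃ i : ℤ,
      g ((rhoP q ^ i) ∞) = x ∧ P 0 = ⇑g '' V0 q ∧
      SepSide (g ((rhoP q ^ (i-1)) ∞)) (g ((rhoP q ^ (i+1)) ∞)) x y) ∧
  y ∈ P (n-1) ∧ (∀ j, j < n - 1 → y ∉ P j) ∧
  (∀ j, j + 1 < n → ∃ a b : RInf, FareyAdj q a b ∧ a ∈ P j ∧ b ∈ P j ∧
      (y ∈ ({a, b}ᶜ : Set RInf) ∧
        ∀ w ∈ P j, w ∉ connectedComponentIn ({a, b}ᶜ : Set RInf) y) ∧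
      P (j+1) ≠ P j ∧ a ∈ P (j+1) ∧ b ∈ P (j+1))

/-- Fibonacci numbers with `F 0 = 1`, `F 1 = 2`. -/
def fibF : ℕ → ℕ
  | 0 => 1
  | 1 => 2
  | (n+2) => fibF (n+1) + fibF n

/-- The transformation `T_b = τ_q^b ∘ σ`, i.e. `z ↦ b·λ_q − 1/z`, as a
permutation of `ℝ∞`. -/
noncomputable def TP (q : ℕ) (b : ℤ) : Equiv.Perm RInf := (tauP q) ^ b * sigmaP


/-!
Write `ρ = T_1 = τ σ`. Using only `σ² = 1`, the left-hand side collapses to the palindrome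
`(ρ^r σ)^{k+1} ρ^r`, while the right-hand side is the `σ`-conjugate of the left-hand side with `τ`
replaced by `τ⁻¹`, which collapses to `(ρ^{-r} σ)^{k+1} ρ^{-r}`. The two agree because
`ρ^q = 1` for `q = 2r`, so `ρ^r = ρ^{-r}`. Indeed `ρ` is the Möbius map of the matrix
`M = [[λ_q, -1], [1, 0]]`, and from `M² = 2 cos θ · M - 1` with `θ = π / q` one gets
`sin θ · M^{n+1} = sin ((n+1) θ) · M - sin (n θ)`, so `M^q = -1`, which acts trivially on `ℝ∞`.
-/

open Real

section HeckeWords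

variable {G : Type*} [Group G]

/- The two sides of the identity, with `T_b = τ ^ b * σ` and `r = m + 2` (so that no truncated
subtraction occurs). -/
def heckeLeftWord (τ σ : G) (m k : ℕ) : G :=
  (τ ^ (1 : ℤ) * σ) ^ (m + 1) * ((τ ^ (2 : ℤ) * σ) * (τ ^ (1 : ℤ) * σ) ^ m) ^ k *
    (τ ^ (2 : ℤ) * σ) * (τ ^ (1 : ℤ) * σ) ^ (m + 1)

def heckeRightWord (τ σ : G) (m k : ℕ) : G :=
  σ * τ⁻¹ * σ * ((τ ^ (-1 : ℤ) * σ) ^ m * (τ ^ (-2 : ℤ) * σ)) ^ (k + 1) *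
    (τ ^ (-1 : ℤ) * σ) ^ m * τ⁻¹

theorem heckeLeftWord_eq {σ : G} (hσ : σ⁻¹ = σ) (τ : G) (m k : ℕ) :
    heckeLeftWord τ σ m k = ((τ * σ) ^ (m + 2) * σ) ^ (k + 1) * (τ * σ) ^ (m + 2) := by
  obtain ⟨ρ, rfl⟩ : ∃ ρ, τ = ρ * σ := ⟨τ * σ⁻¹, by group⟩
  have hσσ : σ * σ = 1 := by simpa [hσ] using mul_inv_cancel σ
  have hT1 : ρ * σ * σ = ρ := by rw [mul_assoc, hσσ, mul_one]
  have hT2 : (ρ * σ) ^ (2 : ℤ) * σ = ρ * σ * ρ := by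
    rw [zpow_two]
    simp only [mul_assoc, hσσ, mul_one]
  have hconj : ρ * σ * ρ * ρ ^ m = ρ * (σ * ρ ^ (m + 2)) * ρ⁻¹ := by group
  rw [heckeLeftWord, zpow_one, hT1, hT2, hconj, conj_pow, mul_pow_mul, pow_succ _ k]
  group

theorem heckeRightWord_eq_conj (τ σ : G) (m k : ℕ) :
    heckeRightWord τ σ m k = σ * heckeLeftWord τ⁻¹ σ m k * σ⁻¹ := by
  have hτ : τ⁻¹ = τ ^ (-1 : ℤ) * σ * σ⁻¹ := by group
  rw [heckeRightWord, heckeLeftWord, inv_zpow', inv_zpow', hτ]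
  generalize τ ^ (-1 : ℤ) * σ = μ
  generalize τ ^ (-2 : ℤ) * σ = ν
  rw [show ν * μ ^ m = ν * (μ ^ m * ν) * ν⁻¹ by group, conj_pow, pow_succ']
  generalize (μ ^ m * ν) ^ k = X
  group

theorem heckeLeftWord_eq_heckeRightWord {σ τ : G} (hσ : σ⁻¹ = σ) (m k : ℕ)
    (hρ : (τ * σ) ^ (2 * (m + 2)) = 1) : heckeLeftWord τ σ m k = heckeRightWord τ σ m k := by
  have hinv : ((τ * σ) ^ (m + 2))⁻¹ = (τ * σ) ^ (m + 2) :=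
    inv_eq_of_mul_eq_one_right (by rw [← pow_add, ← two_mul, hρ])
  have hconj : σ * (τ⁻¹ * σ) * σ⁻¹ = (τ * σ)⁻¹ :=
    calc σ * (τ⁻¹ * σ) * σ⁻¹ = σ * τ⁻¹ := by group
      _ = (τ * σ)⁻¹ := by rw [mul_inv_rev, hσ]
  rw [heckeRightWord_eq_conj, heckeLeftWord_eq hσ, heckeLeftWord_eq hσ,
    ← MulAut.conj_apply]
  generalize τ⁻¹ * σ = y at hconj ⊢
  simp only [map_mul, map_pow, MulAut.conj_apply, hconj, mul_inv_cancel_right, inv_pow, hinv]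

end HeckeWords

theorem sin_smul_pow_succ {A : Type*} [Ring A] [Algebra ℝ A] {θ : ℝ} {M : A}
    (hM : M * M = (2 * cos θ) • M - 1) (n : ℕ) :
    sin θ • M ^ (n + 1) = sin ((n + 1) * θ) • M - sin (n * θ) • (1 : A) := by
  induction n with
  | zero => simp
  | succ n ih =>
    have hsin : sin ((n + 1 + 1) * θ) = 2 * cos θ * sin ((n + 1) * θ) - sin (n * θ) := by
      rw [show (n + 1 + 1) * θ = (n + 1) * θ + θ by ring,
        show (n : ℝ) * θ = (n + 1) * θ - θ by ring, sin_add, sin_sub]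
      ring
    rw [pow_succ, ← smul_mul_assoc, ih, sub_mul, smul_mul_assoc, hM, smul_mul_assoc, one_mul]
    push_cast
    rw [hsin]
    module

theorem pow_eq_neg_one_of_mul_self_eq {A : Type*} [Ring A] [Algebra ℝ A] {q : ℕ} (hq : 2 ≤ q)
    {M : A} (hM : M * M = (2 * cos (π / q)) • M - 1) : M ^ q = -1 := by
  obtain ⟨n, rfl⟩ : ∃ n, q = n + 1 := ⟨q - 1, by omega⟩
  have hsin : sin (π / (n + 1 : ℕ)) ≠ 0 := by
    refine (sin_pos_of_pos_of_lt_pi (by positivity) (div_lt_self pi_pos ?_)).ne'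
    exact_mod_cast (by omega : 1 < n + 1)
  have key := sin_smul_pow_succ hM n
  have hq : ((n : ℝ) + 1) * (π / (n + 1 : ℕ)) = π := by push_cast; field_simp
  have hq' : (n : ℝ) * (π / (n + 1 : ℕ)) = π - π / (n + 1 : ℕ) := by
    push_cast; field_simp; ring
  rw [hq, hq', sin_pi, sin_pi_sub, zero_smul, zero_sub, ← smul_neg] at key
  exact smul_right_injective A hsin key

theorem OnePoint.toPerm_neg_one {K : Type*} [Field K] [DecidableEq K] :
    MulAction.toPerm (-1 : GL (Fin 2) K) = (1 : Equiv.Perm (OnePoint K)) := by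
  ext x
  cases x using OnePoint.rec with
  | infty => simp [OnePoint.smul_infty_eq_ite]
  | coe x => simp [OnePoint.smul_some_eq_ite]

noncomputable def rhoMatrix (q : ℕ) : GL (Fin 2) ℝ :=
  Matrix.GeneralLinearGroup.mkOfDetNeZero !![lamq q, -1; 1, 0] (by simp [Matrix.det_fin_two])

theorem rhoMatrix_pow_self {q : ℕ} (hq : 2 ≤ q) : rhoMatrix q ^ q = -1 := by
  ext1
  push_cast
  refine pow_eq_neg_one_of_mul_self_eq hq ?_
  ext i j
  fin_cases i <;> fin_cases j <;> simp [rhoMatrix, lamq, sub_eq_add_neg]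

theorem sigmaP_infty : sigmaP ∞ = ((0 : ℝ) : RInf) := rfl

theorem sigmaP_coe (x : ℝ) : sigmaP x = if x = 0 then ∞ else ((-x⁻¹ : ℝ) : RInf) := rfl

theorem tauP_infty (q : ℕ) : tauP q ∞ = ∞ := rfl

theorem tauP_coe (q : ℕ) (x : ℝ) : tauP q x = ((x + lamq q : ℝ) : RInf) := rfl

theorem rhoP_eq_toPerm_rhoMatrix (q : ℕ) : rhoP q = MulAction.toPerm (rhoMatrix q) := by
  ext x
  cases x using OnePoint.rec with
  | infty =>
    simp [rhoP, sigmaP_infty, tauP_coe, rhoMatrix, OnePoint.smul_infty_eq_ite]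
  | coe x =>
    by_cases hx : x = 0
    · simp [hx, rhoP, sigmaP_coe, tauP_infty, rhoMatrix, OnePoint.smul_some_eq_ite]
    · have h : (-x⁻¹ + lamq q : ℝ) = (lamq q * x + -1) / x := by
        field_simp
        ring
      simp [hx, rhoP, sigmaP_coe, tauP_coe, rhoMatrix, OnePoint.smul_some_eq_ite, h]

theorem rhoP_pow_self {q : ℕ} (hq : 2 ≤ q) : rhoP q ^ q = 1 := by
  rw [rhoP_eq_toPerm_rhoMatrix, ← MulAction.toPermHom_apply, ← map_pow, rhoMatrix_pow_self hq,
    MulAction.toPermHom_apply, OnePoint.toPerm_neg_one]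

/-- the identity
`T_1^{r-1} (T_2 T_1^{r-2})^k T_2 T_1^{r-1} = σ τ^{-1} σ (T_{-1}^{r-2} T_{-2})^{k+1} T_{-1}^{r-2} τ^{-1}`
in the Hecke group with `q = 2r`. -/
theorem stmt17 (r : ℕ) (hr : 2 ≤ r) (k : ℕ) :
    (TP (2 * r) 1) ^ (r - 1) * ((TP (2 * r) 2) * (TP (2 * r) 1) ^ (r - 2)) ^ k *
        TP (2 * r) 2 * (TP (2 * r) 1) ^ (r - 1) =
      sigmaP * (tauP (2 * r))⁻¹ * sigmaP *
        ((TP (2 * r) (-1)) ^ (r - 2) * TP (2 * r) (-2)) ^ (k + 1) *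
        (TP (2 * r) (-1)) ^ (r - 2) * (tauP (2 * r))⁻¹ := by
  obtain ⟨m, rfl⟩ : ∃ m, r = m + 2 := ⟨r - 2, by omega⟩
  have hσ : sigmaP⁻¹ = sigmaP := rfl
  simp only [TP, Nat.add_sub_cancel, show m + 2 - 1 = m + 1 by omega]
  exact heckeLeftWord_eq_heckeRightWord hσ m k (rhoP_pow_self (by omega))
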